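/- arXiv:2308.13055 — 2 statements merged into one kernel-verified Lean document; each statement's English description precedes it below -/
import Mathlib

section
/- Let D = {x ∈ ℝ³ : x₃ > 0} and let u : ℝ³ → ℝ³ be C³ up to the boundary, divergence-free, with u(x) = 0 for all x with x₃ = 0. Let ω = ∇∧u and θ(x₁,x₂) = ω(x₁,x₂,0). Then at every boundary point, ∂²ω¹/∂x₃² = − ∂³u²/∂x₃³ + Δ_Γ θ¹ − ∂/∂x₁ (∇^Γ·θ). -/
/-- Partial derivative of a scalar field on `ℝⁿ` in the `i`-th coordinate direction. -/
noncomputable def pd {n : ℕ} (i : Fin n) (f : (Fin n → ℝ) → ℝ) (x : Fin n → ℝ) : ℝ :=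
  fderiv ℝ f x (Pi.single i 1)

/-- The curl (vorticity) `ω = ∇ ∧ u` of a vector field on `ℝ³`. -/
noncomputable def curl3 (u : (Fin 3 → ℝ) → Fin 3 → ℝ) (x : Fin 3 → ℝ) : Fin 3 → ℝ :=
  ![pd 1 (fun y => u y 2) x - pd 2 (fun y => u y 1) x,
    pd 2 (fun y => u y 0) x - pd 0 (fun y => u y 2) x,
    pd 0 (fun y => u y 1) x - pd 1 (fun y => u y 0) x]

/-- The boundary vorticity `θ(x₁,x₂) = ω(x₁,x₂,0)` as a field on `∂D = ℝ²`. -/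
noncomputable def bdryVort (u : (Fin 3 → ℝ) → Fin 3 → ℝ) (p : Fin 2 → ℝ) : Fin 3 → ℝ :=
  curl3 u ![p 0, p 1, 0]

/-!
Write `∂ᵢ` for `pd i` (indices from 0, so the paper's `ω¹, u², x₃` are `ω 0, u 1, x 2`).
Expanding `ω 0 = ∂₁u₂ − ∂₂u₁` and `ω 1 = ∂₂u₀ − ∂₀u₂`, the symmetry of third derivatives and
`∂₁∂₂(∇·u) = 0` give, at every point of `ℝ³`,
`∂₂²ω₀ = −∂₂³u₁ + (∂₀² + ∂₁²)ω₀ − ∂₀(∂₀ω₀ + ∂₁ω₁) − ∂₁(∂₀² + ∂₁²)u₂`.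
On `{x₂ = 0}` the last term vanishes, since `u₂ = 0` there and only tangential derivatives
are taken, and tangential derivatives of `ω` there are those of `θ = ω ∘ (p ↦ (p, 0))`.
-/

section PartialDerivatives

variable {n : ℕ}

lemma pd_fun_add {f g : (Fin n → ℝ) → ℝ} (hf : Differentiable ℝ f) (hg : Differentiable ℝ g)
    (i : Fin n) : pd i (fun y => f y + g y) = fun y => pd i f y + pd i g y := by
  funext y
  simp [pd, fderiv_fun_add (hf y) (hg y)]

lemma pd_fun_sub {f g : (Fin n → ℝ) → ℝ} (hf : Differentiable ℝ f) (hg : Differentiable ℝ g)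
    (i : Fin n) : pd i (fun y => f y - g y) = fun y => pd i f y - pd i g y := by
  funext y
  simp [pd, fderiv_fun_sub (hf y) (hg y)]

lemma pd_fun_sum {ι : Type*} {s : Finset ι} {f : ι → (Fin n → ℝ) → ℝ}
    (hf : ∀ k ∈ s, Differentiable ℝ (f k)) (i : Fin n) :
    pd i (fun y => ∑ k ∈ s, f k y) = fun y => ∑ k ∈ s, pd i (f k) y := by
  funext y
  simp [pd, fderiv_fun_sum fun k hk => hf k hk y]

lemma pd_const (i : Fin n) (c : ℝ) : pd i (fun _ => c) = fun _ => 0 := by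
  funext x
  simp [pd]

lemma contDiff_pd {m : WithTop ℕ∞} {f : (Fin n → ℝ) → ℝ} (hf : ContDiff ℝ (m + 1) f)
    (i : Fin n) : ContDiff ℝ m (pd i f) :=
  (hf.fderiv_right le_rfl).clm_apply contDiff_const

lemma pd_comm {f : (Fin n → ℝ) → ℝ} (hf : ContDiff ℝ 2 f) (i j : Fin n) :
    pd i (pd j f) = pd j (pd i f) := by
  funext x
  have hdf : Differentiable ℝ (fderiv ℝ f) := (hf.fderiv_right le_rfl).differentiable one_ne_zero
  have hpd : ∀ v, fderiv ℝ (fun z => fderiv ℝ f z v) x = (fderiv ℝ (fderiv ℝ f) x).flip v :=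
    fun v => by simp [fderiv_clm_apply (hdf x) (differentiableAt_const v)]
  unfold pd
  rw [hpd, hpd, ContinuousLinearMap.flip_apply, ContinuousLinearMap.flip_apply]
  exact (hf.contDiffAt.isSymmSndFDerivAt (by simp [minSmoothness_of_isRCLikeNormedField])) _ _

lemma pd_pd_fun_sub {f g : (Fin n → ℝ) → ℝ} (hf : ContDiff ℝ 2 f) (hg : ContDiff ℝ 2 g)
    (i j : Fin n) :
    pd i (pd j (fun y => f y - g y)) = fun y => pd i (pd j f) y - pd i (pd j g) y := by
  rw [pd_fun_sub (hf.differentiable two_ne_zero) (hg.differentiable two_ne_zero),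
    pd_fun_sub ((contDiff_pd hf j).differentiable one_ne_zero)
      ((contDiff_pd hg j).differentiable one_ne_zero)]

lemma pd_eq_zero_of_eq_zero_on_hyperplane {f : (Fin n → ℝ) → ℝ} {i k : Fin n} (hik : i ≠ k)
    (hf : ∀ y : Fin n → ℝ, y k = 0 → f y = 0) : ∀ y : Fin n → ℝ, y k = 0 → pd i f y = 0 := by
  intro y hy
  by_cases hd : DifferentiableAt ℝ f y
  · have hline : (fun t : ℝ => f (y + t • Pi.single i 1)) = fun _ => 0 :=
      funext fun t => hf _ (by simp [hy, hik.symm])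
    rw [pd, ← hd.lineDeriv_eq_fderiv, lineDeriv, hline, deriv_const]
  · simp [pd, fderiv_zero_of_not_differentiableAt hd]

end PartialDerivatives

section Boundary

variable {n : ℕ}

noncomputable def boundaryEmbedding (n : ℕ) : (Fin n → ℝ) →L[ℝ] (Fin (n + 1) → ℝ) :=
  ContinuousLinearMap.pi (Fin.lastCases 0 (ContinuousLinearMap.proj (R := ℝ)))

lemma boundaryEmbedding_apply (p : Fin n → ℝ) :
    boundaryEmbedding n p = Fin.snoc (α := fun _ => ℝ) p 0 := by
  funext i
  induction i using Fin.lastCases <;> simp [boundaryEmbedding]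

lemma boundaryEmbedding_two_apply (p : Fin 2 → ℝ) : boundaryEmbedding 2 p = ![p 0, p 1, 0] := by
  rw [boundaryEmbedding_apply]
  funext i
  fin_cases i <;> rfl

lemma boundaryEmbedding_single (j : Fin n) :
    boundaryEmbedding n (Pi.single j 1) = Pi.single j.castSucc 1 := by
  funext i
  induction i using Fin.lastCases with
  | last => simp [boundaryEmbedding_apply]
  | cast i => simp [boundaryEmbedding_apply, Pi.single_apply]

lemma pd_comp_boundaryEmbedding {f : (Fin (n + 1) → ℝ) → ℝ} (hf : Differentiable ℝ f)
    (j : Fin n) :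
    pd j (fun p => f (boundaryEmbedding n p))
      = fun p => pd j.castSucc f (boundaryEmbedding n p) := by
  funext p
  change fderiv ℝ (f ∘ boundaryEmbedding n) p _ = _
  rw [fderiv_comp p (hf _) (boundaryEmbedding n).differentiableAt]
  simp [pd, boundaryEmbedding_single]

lemma pd_pd_comp_boundaryEmbedding {f : (Fin (n + 1) → ℝ) → ℝ} (hf : ContDiff ℝ 2 f)
    (i j : Fin n) :
    pd i (pd j (fun p => f (boundaryEmbedding n p)))
      = fun p => pd i.castSucc (pd j.castSucc f) (boundaryEmbedding n p) := by
  rw [pd_comp_boundaryEmbedding (hf.differentiable two_ne_zero),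
    pd_comp_boundaryEmbedding ((contDiff_pd hf _).differentiable one_ne_zero)]

end Boundary

section Vorticity

variable {u : (Fin 3 → ℝ) → Fin 3 → ℝ}

lemma contDiff_curl3 {m : WithTop ℕ∞} (hu : ContDiff ℝ (m + 1) u) : ContDiff ℝ m (curl3 u) := by
  have h : ∀ i j : Fin 3, ContDiff ℝ m (pd i (fun y => u y j)) :=
    fun i j => contDiff_pd (contDiff_pi.1 hu j) i
  refine contDiff_pi.2 fun i => ?_
  fin_cases i
  exacts [(h 1 2).sub (h 2 1), (h 2 0).sub (h 0 2), (h 0 1).sub (h 1 0)]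

lemma pd_pd_curl3_zero_eq_of_divergence_free (hu : ContDiff ℝ 3 u)
    (hdiv : ∀ x : Fin 3 → ℝ, ∑ i : Fin 3, pd i (fun y => u y i) x = 0) (x : Fin 3 → ℝ) :
    pd 2 (pd 2 (fun y => curl3 u y 0)) x
      = -pd 2 (pd 2 (pd 2 (fun y => u y 1))) x
        + (pd 0 (pd 0 (fun y => curl3 u y 0)) x + pd 1 (pd 1 (fun y => curl3 u y 0)) x)
        - pd 0 (fun y => pd 0 (fun z => curl3 u z 0) y + pd 1 (fun z => curl3 u z 1) y) x
        - pd 1 (pd 0 (pd 0 (fun y => u y 2))) x - pd 1 (pd 1 (pd 1 (fun y => u y 2))) x := by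
  have hu₃ : ∀ m, ContDiff ℝ 3 (fun y => u y m) := fun m => contDiff_pi.1 hu m
  have hu₂ : ∀ m, ContDiff ℝ 2 (fun y => u y m) := fun m => (hu₃ m).of_le (by norm_num)
  have hω : ∀ m, ContDiff ℝ 2 (fun y => curl3 u y m) :=
    fun m => contDiff_pi.1 (contDiff_curl3 hu) m
  have hω₀ : (fun y => curl3 u y 0) = fun y => pd 1 (fun z => u z 2) y - pd 2 (fun z => u z 1) y :=
    rfl
  have hω₁ : (fun y => curl3 u y 1) = fun y => pd 2 (fun z => u z 0) y - pd 0 (fun z => u z 2) y :=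
    rfl
  have hdiv₁₂ : ∑ m : Fin 3, pd 1 (pd 2 (pd m (fun y => u y m))) x = 0 := by
    have h := congrArg (fun f => pd 1 (pd 2 f) x) (funext hdiv)
    rwa [pd_fun_sum fun m _ => (contDiff_pd (hu₂ m) m).differentiable one_ne_zero,
      pd_fun_sum fun m _ => (contDiff_pd (contDiff_pd (hu₃ m) m) 2).differentiable one_ne_zero,
      pd_const, pd_const] at h
  have hinner : ∀ m a b c, pd a (pd b (pd c (fun y => u y m))) x
      = pd a (pd c (pd b (fun y => u y m))) x := fun m a b c => by rw [pd_comm (hu₂ m) b c]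
  have houter : ∀ m a b c, pd a (pd b (pd c (fun y => u y m))) x
      = pd b (pd a (pd c (fun y => u y m))) x :=
    fun m a b c => congrFun (pd_comm (contDiff_pd (hu₃ m) c) a b) x
  rw [pd_fun_add ((contDiff_pd (hω 0) 0).differentiable one_ne_zero)
    ((contDiff_pd (hω 1) 1).differentiable one_ne_zero)]
  simp only [hω₀, hω₁, pd_pd_fun_sub (contDiff_pd (hu₃ _) _) (contDiff_pd (hu₃ _) _)]
  rw [Fin.sum_univ_three] at hdiv₁₂
  linarith [hinner 2 2 2 1, houter 2 2 1 2, hinner 1 1 1 2, houter 0 0 1 2, hinner 0 1 0 2,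
    houter 2 0 1 0]

lemma bdryVort_eq_curl3_comp (m : Fin 3) :
    (fun p => bdryVort u p m) = fun p => curl3 u (boundaryEmbedding 2 p) m := by
  simp [bdryVort, boundaryEmbedding_two_apply]

end Vorticity

/-- for a `C³`, divergence-free vector field `u` on the upper half space
vanishing on the boundary `{x₃ = 0}`, at every boundary point
`∂²ω¹/∂x₃² = − ∂³u²/∂x₃³ + Δ_Γ θ¹ − ∂/∂x₁(∇^Γ·θ)`, where `θ(x₁,x₂) = ω(x₁,x₂,0)`. -/
theorem second_normal_derivative_omega1
    (u : (Fin 3 → ℝ) → Fin 3 → ℝ)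
    (hu : ContDiff ℝ 3 u)
    (hdiv : ∀ x : Fin 3 → ℝ, ∑ i : Fin 3, pd i (fun y => u y i) x = 0)
    (hnoslip : ∀ x : Fin 3 → ℝ, x 2 = 0 → u x = 0) :
    ∀ x : Fin 3 → ℝ, x 2 = 0 →
      pd 2 (pd 2 (fun y => curl3 u y 0)) x
        = -(pd 2 (pd 2 (pd 2 (fun y => u y 1))) x)
          + (pd 0 (pd 0 (fun p => bdryVort u p 0)) ![x 0, x 1]
              + pd 1 (pd 1 (fun p => bdryVort u p 0)) ![x 0, x 1])
          - pd 0 (fun p => pd 0 (fun q => bdryVort u q 0) p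
              + pd 1 (fun q => bdryVort u q 1) p) ![x 0, x 1] := by
  intro x hx
  have hω : ∀ m, ContDiff ℝ 2 (fun y => curl3 u y m) :=
    fun m => contDiff_pi.1 (contDiff_curl3 hu) m
  have hx' : boundaryEmbedding 2 ![x 0, x 1] = x := by
    rw [boundaryEmbedding_two_apply]
    funext i
    fin_cases i <;> simp [hx]
  have hθdiv : (fun p => pd 0 (fun q => bdryVort u q 0) p + pd 1 (fun q => bdryVort u q 1) p)
      = fun p => (fun y => pd 0 (fun z => curl3 u z 0) y + pd 1 (fun z => curl3 u z 1) y)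
          (boundaryEmbedding 2 p) := by
    rw [bdryVort_eq_curl3_comp, bdryVort_eq_curl3_comp,
      pd_comp_boundaryEmbedding ((hω 0).differentiable two_ne_zero),
      pd_comp_boundaryEmbedding ((hω 1).differentiable two_ne_zero)]
    rfl
  have htangential : ∀ i j k : Fin 3, i ≠ 2 → j ≠ 2 → k ≠ 2 →
      pd i (pd j (pd k (fun y => u y 2))) x = 0 := fun i j k hi hj hk =>
    pd_eq_zero_of_eq_zero_on_hyperplane hi (pd_eq_zero_of_eq_zero_on_hyperplane hj
      (pd_eq_zero_of_eq_zero_on_hyperplane hk fun y hy => by simp [hnoslip y hy])) x hx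
  rw [hθdiv, pd_comp_boundaryEmbedding
      (((contDiff_pd (hω 0) 0).differentiable one_ne_zero).fun_add
        ((contDiff_pd (hω 1) 1).differentiable one_ne_zero)), bdryVort_eq_curl3_comp,
    pd_pd_comp_boundaryEmbedding (hω 0), pd_pd_comp_boundaryEmbedding (hω 0)]
  dsimp only
  rw [hx', pd_pd_curl3_zero_eq_of_divergence_free hu hdiv x,
    htangential 1 0 0 (by decide) (by decide) (by decide),
    htangential 1 1 1 (by decide) (by decide) (by decide)]
  simp only [Fin.castSucc_zero, Fin.castSucc_one]
  ring
end

section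
/- Let D = {x ∈ ℝ² : x₂ > 0} and let u = (u¹,u²) : closure(D) → ℝ² be C¹ up to the boundary, divergence-free in D, with u²(x₁,0) = 0 for all x₁. Define the reflected extension ũ on ℝ² by ũ(x) = u(x) for x₂ ≥ 0 and ũ¹(x₁,x₂) = u¹(x₁,−x₂), ũ²(x₁,x₂) = −u²(x₁,−x₂) for x₂ < 0. Then ũ is divergence-free on ℝ² in the sense of distributions: for every smooth compactly supported test function χ : ℝ² → ℝ, ∫_{ℝ²} ũ(x)·∇χ(x) dx = 0. -/
open MeasureTheory
open Set Function

namespace Refl17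

noncomputable def Lc : (ℝ × ℝ) →L[ℝ] (Fin 2 → ℝ) :=
  (ContinuousLinearEquiv.finTwoArrow ℝ ℝ).symm.toContinuousLinearMap

lemma Lc_apply (p : ℝ × ℝ) : Lc p = ![p.1, p.2] := by
  funext i; fin_cases i <;> rfl

noncomputable def σc : (ℝ × ℝ) →L[ℝ] (ℝ × ℝ) :=
  (ContinuousLinearMap.id ℝ ℝ).prodMap (-(ContinuousLinearMap.id ℝ ℝ))

lemma σc_apply (p : ℝ × ℝ) : σc p = (p.1, -p.2) := rfl

lemma e1 : (![(1:ℝ), 0] : Fin 2 → ℝ) = Pi.single 0 1 := by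
  funext i; fin_cases i <;> simp

lemma e2 : (![(0:ℝ), 1] : Fin 2 → ℝ) = Pi.single 1 1 := by
  funext i; fin_cases i <;> simp

lemma Lc_e1 : Lc (1, 0) = Pi.single 0 1 := by rw [Lc_apply]; exact e1
lemma Lc_e2 : Lc (0, 1) = Pi.single 1 1 := by rw [Lc_apply]; exact e2
lemma Lc_e2' : Lc ((0 : ℝ), (-1 : ℝ)) = -Pi.single 1 1 := by
  rw [Lc_apply]
  funext i; fin_cases i <;> simp

lemma measurePreserving_σ : MeasurePreserving (fun p : ℝ × ℝ => (p.1, -p.2)) volume volume := by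
  have h : (volume : Measure (ℝ × ℝ)) = (volume : Measure ℝ).prod volume := rfl
  rw [h]
  exact (MeasurePreserving.id _).prod (Measure.measurePreserving_neg _)

lemma measurableEmbedding_σ : MeasurableEmbedding (fun p : ℝ × ℝ => (p.1, -p.2)) := by
  have h : (fun p : ℝ × ℝ => (p.1, -p.2))
      = ⇑((MeasurableEquiv.refl ℝ).prodCongr (MeasurableEquiv.neg ℝ)) := rfl
  rw [h]
  exact MeasurableEquiv.measurableEmbedding _

lemma support_fderiv_apply_subset {n : ℕ} {f : (Fin n → ℝ) → ℝ} (v : Fin n → ℝ) :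
    support (fun x => fderiv ℝ f x v) ⊆ tsupport f := by
  intro x hx
  by_contra hxs
  have h0 : fderiv ℝ f x = 0 := by
    have h : f =ᶠ[nhds x] 0 := notMem_tsupport_iff_eventuallyEq.mp hxs
    rw [h.fderiv_eq]
    exact fderiv_const_apply 0
  simp [h0] at hx

/-- compact support descends along maps with a continuous retraction -/
lemma hasCompactSupport_comp {φ : (Fin 2 → ℝ) → ℝ} (hφ : HasCompactSupport φ)
    (m : ℝ × ℝ → Fin 2 → ℝ) (minv : (Fin 2 → ℝ) → ℝ × ℝ) (hminv : Continuous minv)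
    (hinv : ∀ p, minv (m p) = p) : HasCompactSupport (fun p => φ (m p)) := by
  apply HasCompactSupport.intro (hφ.isCompact.image hminv)
  intro p hp
  by_contra h0
  exact hp ⟨m p, subset_tsupport φ (mem_support.mpr h0), hinv p⟩


lemma line_null : (volume : Measure (ℝ × ℝ)) {p : ℝ × ℝ | p.2 = 0} = 0 := by
  have h : {p : ℝ × ℝ | p.2 = 0} = (univ : Set ℝ) ×ˢ ({0} : Set ℝ) := by
    ext p
    simp only [mem_setOf_eq, Set.mem_prod, mem_univ, mem_singleton_iff, true_and]
  rw [h]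
  have h2 : (volume : Measure (ℝ × ℝ)) = (volume : Measure ℝ).prod volume := rfl
  rw [h2, Measure.prod_prod]
  simp

lemma integrableOn_mul_of_compactSupport {s : Set (ℝ × ℝ)} (hs : IsClosed s)
    {F G : ℝ × ℝ → ℝ} (hF : ContinuousOn F s) (hG : Continuous G)
    (hGc : HasCompactSupport G) : IntegrableOn (fun p => F p * G p) s := by
  have hK : IsCompact (tsupport G) := hGc
  have h1 : IntegrableOn (fun p => F p * G p) (s ∩ tsupport G) := by
    apply ContinuousOn.integrableOn_compact (hK.inter_left hs)
    exact (hF.mono inter_subset_left).mul (hG.continuousOn)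
  have h2 : IntegrableOn (fun p => F p * G p) (s \ tsupport G) := by
    apply ((integrableOn_zero (ε' := ℝ)).congr_fun ?_
      (hs.measurableSet.diff (isClosed_tsupport G).measurableSet))
    intro p hp
    have : G p = 0 := image_eq_zero_of_notMem_tsupport hp.2
    simp [this]
  have := h1.union h2
  rwa [Set.inter_union_diff] at this

lemma support_fderiv_apply_subset' {f : (ℝ × ℝ) → ℝ} (v : ℝ × ℝ) :
    support (fun x => fderiv ℝ f x v) ⊆ tsupport f := by
  intro x hx
  by_contra hxs
  have h0 : fderiv ℝ f x = 0 := by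
    have h : f =ᶠ[nhds x] 0 := notMem_tsupport_iff_eventuallyEq.mp hxs
    rw [h.fderiv_eq]
    exact fderiv_const_apply 0
  simp [h0] at hx

lemma halfplane_divergence
    (f g : ℝ × ℝ → ℝ) (df dg : ℝ × ℝ → (ℝ × ℝ →L[ℝ] ℝ)) (ψ : ℝ × ℝ → ℝ)
    (hf : ContinuousOn f {p : ℝ × ℝ | 0 ≤ p.2})
    (hg : ContinuousOn g {p : ℝ × ℝ | 0 ≤ p.2})
    (hdf : ∀ p : ℝ × ℝ, 0 < p.2 → HasFDerivAt f (df p) p)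
    (hdg : ∀ p : ℝ × ℝ, 0 < p.2 → HasFDerivAt g (dg p) p)
    (hdiv : ∀ p : ℝ × ℝ, 0 < p.2 → df p (1, 0) + dg p (0, 1) = 0)
    (hg0 : ∀ x : ℝ, g (x, 0) = 0)
    (hψ : ContDiff ℝ (⊤ : ℕ∞) ψ) (hψc : HasCompactSupport ψ) :
    ∫ p in {p : ℝ × ℝ | 0 < p.2},
      (f p * fderiv ℝ ψ p (1, 0) + g p * fderiv ℝ ψ p (0, 1)) = 0 := by
  classical
  have hclosed : IsClosed {p : ℝ × ℝ | 0 ≤ p.2} :=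
    isClosed_le continuous_const continuous_snd
  have hopen : IsOpen {p : ℝ × ℝ | 0 < p.2} :=
    isOpen_lt continuous_const continuous_snd
  have hAH : {p : ℝ × ℝ | 0 < p.2} ⊆ {p : ℝ × ℝ | 0 ≤ p.2} := fun p hp => show (0:ℝ) ≤ p.2 from le_of_lt hp
  -- choose R
  obtain ⟨R0, hR0⟩ := hψc.isCompact.isBounded.subset_closedBall 0
  set R : ℝ := max R0 0 + 1 with hR
  have hRpos : 0 < R := by positivity
  have hsupp : tsupport ψ ⊆ Metric.ball (0 : ℝ × ℝ) R := by
    refine hR0.trans ?_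
    intro p hp
    simp only [Metric.mem_closedBall, dist_zero_right] at hp
    simp only [Metric.mem_ball, dist_zero_right]
    calc ‖p‖ ≤ R0 := hp
    _ ≤ max R0 0 := le_max_left _ _
    _ < R := by rw [hR]; linarith
  have hψ0 : ∀ p : ℝ × ℝ, p ∉ Metric.ball (0 : ℝ × ℝ) R → ψ p = 0 := fun p hp =>
    image_eq_zero_of_notMem_tsupport (fun h => hp (hsupp h))
  have hdψ0 : ∀ p : ℝ × ℝ, p ∉ Metric.ball (0 : ℝ × ℝ) R → fderiv ℝ ψ p = 0 := by
    intro p hp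
    have h : ψ =ᶠ[nhds p] 0 :=
      notMem_tsupport_iff_eventuallyEq.mp (fun h => hp (hsupp h))
    rw [h.fderiv_eq]
    exact fderiv_const_apply 0
  have hball : ∀ p : ℝ × ℝ, p ∈ Metric.ball (0 : ℝ × ℝ) R → |p.1| < R ∧ |p.2| < R := by
    intro p hp
    simpa only [Metric.mem_ball, dist_zero_right, Prod.norm_def, Real.norm_eq_abs,
      max_lt_iff] using hp
  have hab : ((-R, 0) : ℝ × ℝ) ≤ (R, R) := ⟨by dsimp; linarith, by dsimp; linarith⟩
  have hIccH : Icc ((-R, 0) : ℝ × ℝ) (R, R) ⊆ {p : ℝ × ℝ | 0 ≤ p.2} := fun p hp => hp.1.2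
  set W : ℝ × ℝ → ℝ :=
    fun p => f p * fderiv ℝ ψ p (1, 0) + g p * fderiv ℝ ψ p (0, 1) with hWdef
  have hdψcont : Continuous (fderiv ℝ ψ) := (hψ.fderiv_right (m := (⊤ : ℕ∞)) (by simp)).continuous
  have hWcont : ContinuousOn W {p : ℝ × ℝ | 0 ≤ p.2} := by
    apply ContinuousOn.add
    · exact hf.mul ((hdψcont.clm_apply continuous_const).continuousOn)
    · exact hg.mul ((hdψcont.clm_apply continuous_const).continuousOn)
  have hWH : IntegrableOn W {p : ℝ × ℝ | 0 ≤ p.2} := by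
    apply Integrable.add
    · exact integrableOn_mul_of_compactSupport hclosed hf
        (hdψcont.clm_apply continuous_const)
        (hψc.mono' (support_fderiv_apply_subset' _))
    · exact integrableOn_mul_of_compactSupport hclosed hg
        (hdψcont.clm_apply continuous_const)
        (hψc.mono' (support_fderiv_apply_subset' _))
  set F' : ℝ × ℝ → (ℝ × ℝ →L[ℝ] ℝ) :=
    fun p => f p • fderiv ℝ ψ p + ψ p • df p with hF'def
  set G' : ℝ × ℝ → (ℝ × ℝ →L[ℝ] ℝ) :=
    fun p => g p • fderiv ℝ ψ p + ψ p • dg p with hG'def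
  have key : ∀ p : ℝ × ℝ, 0 < p.2 → F' p (1, 0) + G' p (0, 1) = W p := by
    intro p hp
    have h := hdiv p hp
    simp only [hF'def, hG'def, hWdef, ContinuousLinearMap.add_apply,
      ContinuousLinearMap.coe_smul', Pi.smul_apply, smul_eq_mul]
    linear_combination ψ p * h
  have hae : (fun p => F' p (1, 0) + G' p (0, 1))
      =ᵐ[volume.restrict (Icc ((-R, 0) : ℝ × ℝ) (R, R))] W := by
    rw [Filter.EventuallyEq, ae_restrict_iff' measurableSet_Icc]
    have hnl : ∀ᵐ p : ℝ × ℝ ∂volume, p ∉ {p : ℝ × ℝ | p.2 = 0} :=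
      measure_eq_zero_iff_ae_notMem.mp line_null
    filter_upwards [hnl] with p hp hpIcc
    have h2 : 0 ≤ p.2 := hpIcc.1.2
    have h3 : p.2 ≠ 0 := hp
    exact key p (lt_of_le_of_ne h2 (Ne.symm h3))
  have hWIcc : IntegrableOn W (Icc ((-R, 0) : ℝ × ℝ) (R, R)) :=
    (hWcont.mono hIccH).integrableOn_compact isCompact_Icc
  have Hi : IntegrableOn (fun p => F' p (1, 0) + G' p (0, 1))
      (Icc ((-R, 0) : ℝ × ℝ) (R, R)) := hWIcc.congr hae.symm
  have hFd : ∀ p ∈ Ioo (-R) R ×ˢ Ioo (0:ℝ) R \ (∅ : Set (ℝ × ℝ)),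
      HasFDerivAt (fun q => f q * ψ q) (F' p) p := by
    rintro p ⟨⟨_, hp2⟩, -⟩
    exact (hdf p hp2.1).mul ((hψ.differentiable (by simp) p).hasFDerivAt)
  have hGd : ∀ p ∈ Ioo (-R) R ×ˢ Ioo (0:ℝ) R \ (∅ : Set (ℝ × ℝ)),
      HasFDerivAt (fun q => g q * ψ q) (G' p) p := by
    rintro p ⟨⟨_, hp2⟩, -⟩
    exact (hdg p hp2.1).mul ((hψ.differentiable (by simp) p).hasFDerivAt)
  have hdivthm := integral_divergence_prod_Icc_of_hasFDerivAt_off_countable_of_le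
    (fun q => f q * ψ q) (fun q => g q * ψ q) F' G' ((-R, 0) : ℝ × ℝ) (R, R) hab
    ∅ countable_empty
    ((hf.mono hIccH).mul (hψ.continuous.continuousOn))
    ((hg.mono hIccH).mul (hψ.continuous.continuousOn))
    hFd hGd Hi
  -- boundary terms vanish
  have hbt : ∀ x : ℝ, g (x, (R:ℝ)) * ψ (x, R) = 0 := by
    intro x
    have : ((x, R) : ℝ × ℝ) ∉ Metric.ball (0 : ℝ × ℝ) R := by
      intro h
      have := (hball _ h).2
      simp at this
      linarith [abs_nonneg R, le_abs_self R]
    rw [hψ0 _ this, mul_zero]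
  have hbb : ∀ x : ℝ, g (x, (0:ℝ)) * ψ (x, 0) = 0 := by
    intro x; rw [hg0 x, zero_mul]
  have hbr : ∀ y : ℝ, f ((R:ℝ), y) * ψ (R, y) = 0 := by
    intro y
    have : ((R, y) : ℝ × ℝ) ∉ Metric.ball (0 : ℝ × ℝ) R := by
      intro h
      have := (hball _ h).1
      simp at this
      linarith [le_abs_self R]
    rw [hψ0 _ this, mul_zero]
  have hbl : ∀ y : ℝ, f (-(R:ℝ), y) * ψ (-R, y) = 0 := by
    intro y
    have : ((-R, y) : ℝ × ℝ) ∉ Metric.ball (0 : ℝ × ℝ) R := by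
      intro h
      have := (hball _ h).1
      simp at this
      linarith [le_abs_self R, neg_abs_le R]
    rw [hψ0 _ this, mul_zero]
  have hIcc0 : ∫ p in Icc ((-R, 0) : ℝ × ℝ) (R, R), W p = 0 := by
    rw [← integral_congr_ae hae, hdivthm]
    simp only [hbt, hbb, hbr, hbl, intervalIntegral.integral_zero]
    ring
  -- now relate set integral over upper half plane to the Icc
  have hA : ∫ p in {p : ℝ × ℝ | 0 < p.2}, W p
      = ∫ p in {p : ℝ × ℝ | 0 < p.2} ∩ Icc ((-R, 0) : ℝ × ℝ) (R, R), W p := by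
    have hsplit : {p : ℝ × ℝ | 0 < p.2}
        = ({p : ℝ × ℝ | 0 < p.2} ∩ Icc ((-R, 0) : ℝ × ℝ) (R, R))
          ∪ ({p : ℝ × ℝ | 0 < p.2} \ Icc ((-R, 0) : ℝ × ℝ) (R, R)) :=
      (Set.inter_union_diff _ _).symm
    conv_lhs => rw [hsplit]
    rw [setIntegral_union
      (disjoint_sdiff_self_right.mono_left inter_subset_right)
      (hopen.measurableSet.diff measurableSet_Icc)
      (hWH.mono_set (inter_subset_left.trans hAH))
      (hWH.mono_set ((diff_subset).trans hAH))]
    have hzero : ∫ p in {p : ℝ × ℝ | 0 < p.2} \ Icc ((-R, 0) : ℝ × ℝ) (R, R), W p = 0 := by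
      apply setIntegral_eq_zero_of_forall_eq_zero
      intro p hp
      have hpb : p ∉ Metric.ball (0 : ℝ × ℝ) R := by
        intro hmem
        obtain ⟨h1, h2⟩ := hball p hmem
        rw [abs_lt] at h1 h2
        have hp1 : (0:ℝ) < p.2 := hp.1
        apply hp.2
        simp only [Set.mem_Icc, Prod.le_def]
        exact ⟨⟨by linarith, by linarith⟩, ⟨by linarith, by linarith⟩⟩
      simp only [hWdef, hdψ0 p hpb]
      simp
    rw [hzero, add_zero]
  have hAIcc : (({p : ℝ × ℝ | 0 < p.2} ∩ Icc ((-R, 0) : ℝ × ℝ) (R, R)) : Set (ℝ × ℝ))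
      =ᵐ[(volume : Measure (ℝ × ℝ))] (Icc ((-R, 0) : ℝ × ℝ) (R, R) : Set (ℝ × ℝ)) := by
    rw [ae_eq_set]
    constructor
    · apply measure_mono_null ?_ line_null
      rintro p ⟨⟨_, _⟩, hn⟩
      exact absurd ‹p ∈ Icc _ _› hn
    · apply measure_mono_null ?_ line_null
      rintro p ⟨hpIcc, hn⟩
      have h2 : 0 ≤ p.2 := hpIcc.1.2
      have : ¬ 0 < p.2 := fun h => hn ⟨h, hpIcc⟩
      exact le_antisymm (not_lt.mp this) h2
  calc ∫ p in {p : ℝ × ℝ | 0 < p.2}, W p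
      = ∫ p in {p : ℝ × ℝ | 0 < p.2} ∩ Icc ((-R, 0) : ℝ × ℝ) (R, R), W p := hA
    _ = ∫ p in Icc ((-R, 0) : ℝ × ℝ) (R, R), W p := setIntegral_congr_set hAIcc
    _ = 0 := hIcc0


end Refl17

open Refl17

/-- let `u` be `C¹` up to the boundary of the upper half plane,
divergence-free there, with `u²(x₁,0) = 0`. Then its reflected extension
`ũ¹(x₁,x₂) = u¹(x₁,−x₂)`, `ũ²(x₁,x₂) = −u²(x₁,−x₂)` for `x₂ < 0` is divergence-free on
`ℝ²` in the sense of distributions: `∫ ũ·∇χ = 0` for every smooth compactly supported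
test function `χ`. -/
theorem reflected_extension_divergence_free
    (u : (Fin 2 → ℝ) → Fin 2 → ℝ)
    (hu : ContDiffOn ℝ 1 u {x : Fin 2 → ℝ | 0 ≤ x 1})
    (hdiv : ∀ x : Fin 2 → ℝ, 0 < x 1 →
      pd 0 (fun y => u y 0) x + pd 1 (fun y => u y 1) x = 0)
    (hb : ∀ x : Fin 2 → ℝ, x 1 = 0 → u x 1 = 0)
    (v : (Fin 2 → ℝ) → Fin 2 → ℝ)
    (hv : v = fun x => if 0 ≤ x 1 then u x
      else ![u ![x 0, -x 1] 0, -u ![x 0, -x 1] 1]) :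
    ∀ χ : (Fin 2 → ℝ) → ℝ, ContDiff ℝ (⊤ : ℕ∞) χ → HasCompactSupport χ →
      ∫ x : Fin 2 → ℝ, (v x 0 * pd 0 χ x + v x 1 * pd 1 χ x) = 0 := by
  intro χ hχ hχc
  classical
  -- basic sets
  have hclosed : IsClosed {p : ℝ × ℝ | 0 ≤ p.2} :=
    isClosed_le continuous_const continuous_snd
  have hclosed' : IsClosed {p : ℝ × ℝ | p.2 ≤ 0} :=
    isClosed_le continuous_snd continuous_const
  have hopen : IsOpen {p : ℝ × ℝ | 0 < p.2} :=
    isOpen_lt continuous_const continuous_snd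
  -- component functions on ℝ × ℝ
  set f : ℝ × ℝ → ℝ := fun p => u (Lc p) 0 with hfdef
  set g : ℝ × ℝ → ℝ := fun p => u (Lc p) 1 with hgdef
  set c1 : ℝ × ℝ → ℝ := fun p => pd 0 χ (Lc p) with hc1def
  set c2 : ℝ × ℝ → ℝ := fun p => pd 1 χ (Lc p) with hc2def
  set ψ : ℝ × ℝ → ℝ := fun p => χ (Lc p) + χ (Lc (σc p)) with hψdef
  -- membership facts
  have hmemL : ∀ p : ℝ × ℝ, 0 ≤ p.2 → Lc p ∈ {x : Fin 2 → ℝ | 0 ≤ x 1} := by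
    intro p hp
    simp [Lc_apply]
    exact hp
  have hmemLσ : ∀ p : ℝ × ℝ, p.2 ≤ 0 → Lc (σc p) ∈ {x : Fin 2 → ℝ | 0 ≤ x 1} := by
    intro p hp
    simp [Lc_apply, σc_apply]
    linarith
  -- continuity of f, g on the closed upper half plane
  have hfc : ContinuousOn f {p : ℝ × ℝ | 0 ≤ p.2} := by
    apply (continuous_apply (0 : Fin 2)).comp_continuousOn
    exact hu.continuousOn.comp Lc.continuous.continuousOn hmemL
  have hgc : ContinuousOn g {p : ℝ × ℝ | 0 ≤ p.2} := by
    apply (continuous_apply (1 : Fin 2)).comp_continuousOn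
    exact hu.continuousOn.comp Lc.continuous.continuousOn hmemL
  have hfcσ : ContinuousOn (fun p => f (σc p)) {p : ℝ × ℝ | p.2 ≤ 0} := by
    apply ((continuous_apply (0 : Fin 2)).comp_continuousOn)
    refine hu.continuousOn.comp (Lc.continuous.comp σc.continuous).continuousOn ?_
    exact hmemLσ
  have hgcσ : ContinuousOn (fun p => g (σc p)) {p : ℝ × ℝ | p.2 ≤ 0} := by
    apply ((continuous_apply (1 : Fin 2)).comp_continuousOn)
    refine hu.continuousOn.comp (Lc.continuous.comp σc.continuous).continuousOn ?_
    exact hmemLσ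
  -- pd of χ : continuity and compact support
  have hdχcont : Continuous (fderiv ℝ χ) := (hχ.fderiv_right (m := (⊤ : ℕ∞)) (by simp)).continuous
  have hpdcont : ∀ i : Fin 2, Continuous (pd i χ) := by
    intro i
    exact hdχcont.clm_apply continuous_const
  have hpdcs : ∀ i : Fin 2, HasCompactSupport (pd i χ) := by
    intro i
    exact hχc.mono' (support_fderiv_apply_subset (Pi.single i 1))
  have hinv1 : ∀ p : ℝ × ℝ, ((Lc p 0, Lc p 1) : ℝ × ℝ) = p := by
    intro p; rw [Lc_apply]; simp
  have hinv2 : ∀ p : ℝ × ℝ, ((Lc (σc p) 0, -(Lc (σc p) 1)) : ℝ × ℝ) = p := by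
    intro p; rw [σc_apply, Lc_apply]; simp
  have hc1cont : Continuous c1 := (hpdcont 0).comp Lc.continuous
  have hc2cont : Continuous c2 := (hpdcont 1).comp Lc.continuous
  have hc1cs : HasCompactSupport c1 :=
    hasCompactSupport_comp (hpdcs 0) (⇑Lc) (fun x => (x 0, x 1))
      (by fun_prop) hinv1
  have hc2cs : HasCompactSupport c2 :=
    hasCompactSupport_comp (hpdcs 1) (⇑Lc) (fun x => (x 0, x 1))
      (by fun_prop) hinv1
  have hc1σcont : Continuous (fun p => c1 (σc p)) := hc1cont.comp σc.continuous
  have hc2σcont : Continuous (fun p => c2 (σc p)) := hc2cont.comp σc.continuous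
  have hc1σcs : HasCompactSupport (fun p => c1 (σc p)) :=
    hasCompactSupport_comp (hpdcs 0) (fun p => Lc (σc p)) (fun x => (x 0, -(x 1)))
      (by fun_prop) hinv2
  have hc2σcs : HasCompactSupport (fun p => c2 (σc p)) :=
    hasCompactSupport_comp (hpdcs 1) (fun p => Lc (σc p)) (fun x => (x 0, -(x 1)))
      (by fun_prop) hinv2
  -- ψ : smooth with compact support
  have hψsmooth : ContDiff ℝ (⊤ : ℕ∞) ψ :=
    (hχ.comp Lc.contDiff).add (hχ.comp (Lc.comp σc).contDiff)
  have hψcs : HasCompactSupport ψ := by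
    apply HasCompactSupport.add
    · exact hasCompactSupport_comp hχc (⇑Lc) (fun x => (x 0, x 1)) (by fun_prop) hinv1
    · exact hasCompactSupport_comp hχc (fun p => Lc (σc p)) (fun x => (x 0, -(x 1)))
        (by fun_prop) hinv2
  -- derivatives of ψ
  have hψhd : ∀ p : ℝ × ℝ, HasFDerivAt ψ
      ((fderiv ℝ χ (Lc p)).comp Lc + (fderiv ℝ χ (Lc (σc p))).comp (Lc.comp σc)) p := by
    intro p
    apply HasFDerivAt.add
    · exact ((hχ.differentiable (by simp) _).hasFDerivAt).comp p Lc.hasFDerivAt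
    · exact ((hχ.differentiable (by simp) _).hasFDerivAt).comp p (Lc.comp σc).hasFDerivAt
  have hψd1 : ∀ p : ℝ × ℝ, fderiv ℝ ψ p (1, 0) = c1 p + c1 (σc p) := by
    intro p
    rw [(hψhd p).fderiv]
    simp only [ContinuousLinearMap.add_apply, ContinuousLinearMap.comp_apply]
    have h1 : σc ((1 : ℝ), (0 : ℝ)) = ((1 : ℝ), (0 : ℝ)) := by rw [σc_apply]; simp
    rw [h1, Lc_e1]
    rfl
  have hψd2 : ∀ p : ℝ × ℝ, fderiv ℝ ψ p (0, 1) = c2 p - c2 (σc p) := by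
    intro p
    rw [(hψhd p).fderiv]
    simp only [ContinuousLinearMap.add_apply, ContinuousLinearMap.comp_apply]
    have h1 : σc ((0 : ℝ), (1 : ℝ)) = ((0 : ℝ), (-1 : ℝ)) := by rw [σc_apply]
    rw [h1, Lc_e2, Lc_e2', map_neg]
    show c2 p + -(c2 (σc p)) = _
    ring
  -- coordinate facts
  have hLc0 : ∀ p : ℝ × ℝ, Lc p 0 = p.1 := by intro p; rw [Lc_apply]; simp
  have hLc1 : ∀ p : ℝ × ℝ, Lc p 1 = p.2 := by intro p; rw [Lc_apply]; simp
  -- transfer the integral to ℝ × ℝ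
  have hsymm : ∀ p : ℝ × ℝ,
      ((MeasurableEquiv.finTwoArrow (α := ℝ)).symm p : Fin 2 → ℝ) = Lc p := by
    intro p; rw [Lc_apply]; funext i; fin_cases i <;> rfl
  have htrans : ∫ x : Fin 2 → ℝ, (v x 0 * pd 0 χ x + v x 1 * pd 1 χ x)
      = ∫ p : ℝ × ℝ, (v (Lc p) 0 * c1 p + v (Lc p) 1 * c2 p) := by
    rw [← ((volume_preserving_finTwoArrow ℝ).symm _).integral_comp
      (MeasurableEquiv.finTwoArrow (α := ℝ)).symm.measurableEmbedding
      (fun x => v x 0 * pd 0 χ x + v x 1 * pd 1 χ x)]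
    congr 1
  -- identify the piecewise structure
  set q : ℝ × ℝ → ℝ := fun p => f p * c1 p + g p * c2 p with hqdef
  set r : ℝ × ℝ → ℝ := fun p => f (σc p) * c1 p - g (σc p) * c2 p with hrdef
  have hvL : ∀ p : ℝ × ℝ, 0 ≤ p.2 → v (Lc p) = u (Lc p) := by
    intro p hp
    rw [hv]
    dsimp only
    rw [hLc1, if_pos hp]
  have hvLneg : ∀ p : ℝ × ℝ, ¬ 0 ≤ p.2 → v (Lc p) = ![f (σc p), -(g (σc p))] := by
    intro p hp
    rw [hv]
    dsimp only
    rw [hLc0, hLc1, if_neg hp]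
    have h1 : f (σc p) = u ![p.1, -p.2] 0 := by
      rw [hfdef]; dsimp only; rw [Lc_apply, σc_apply]
    have h2 : g (σc p) = u ![p.1, -p.2] 1 := by
      rw [hgdef]; dsimp only; rw [Lc_apply, σc_apply]
    rw [h1, h2]
  have hsplitfun : (fun p : ℝ × ℝ => v (Lc p) 0 * c1 p + v (Lc p) 1 * c2 p)
      = Set.piecewise {p : ℝ × ℝ | 0 ≤ p.2} q r := by
    funext p
    by_cases hp : (0:ℝ) ≤ p.2
    · rw [Set.piecewise_eq_of_mem _ _ _ (show p ∈ {p : ℝ × ℝ | 0 ≤ p.2} from hp), hvL p hp]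
    · rw [Set.piecewise_eq_of_notMem _ _ _ (show p ∉ {p : ℝ × ℝ | 0 ≤ p.2} from hp), hvLneg p hp]
      show (![f (σc p), -(g (σc p))] : Fin 2 → ℝ) 0 * c1 p
          + (![f (σc p), -(g (σc p))] : Fin 2 → ℝ) 1 * c2 p = r p
      rw [hrdef]
      simp only [Matrix.cons_val_zero, Matrix.cons_val_one, Matrix.head_cons]
      ring
  -- integrability
  have hqint : IntegrableOn q {p : ℝ × ℝ | 0 ≤ p.2} := by
    apply Integrable.add
    · exact integrableOn_mul_of_compactSupport hclosed hfc hc1cont hc1cs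
    · exact integrableOn_mul_of_compactSupport hclosed hgc hc2cont hc2cs
  have hrint' : IntegrableOn r {p : ℝ × ℝ | p.2 ≤ 0} := by
    apply Integrable.sub
    · exact integrableOn_mul_of_compactSupport hclosed' hfcσ hc1cont hc1cs
    · exact integrableOn_mul_of_compactSupport hclosed' hgcσ hc2cont hc2cs
  have hcompl : ({p : ℝ × ℝ | 0 ≤ p.2} : Set (ℝ × ℝ))ᶜ = {p : ℝ × ℝ | p.2 < 0} := by
    ext p; simp [not_le]
  have hrint : IntegrableOn r ({p : ℝ × ℝ | 0 ≤ p.2} : Set (ℝ × ℝ))ᶜ := by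
    rw [hcompl]
    exact hrint'.mono_set (fun p hp => show p.2 ≤ (0:ℝ) from le_of_lt hp)
  -- split the integral
  rw [htrans, hsplitfun, integral_piecewise hclosed.measurableSet hqint hrint]
  -- replace the closed half plane by the open one
  have hHA : ({p : ℝ × ℝ | 0 ≤ p.2} : Set (ℝ × ℝ))
      =ᵐ[(volume : Measure (ℝ × ℝ))] ({p : ℝ × ℝ | 0 < p.2} : Set (ℝ × ℝ)) := by
    rw [ae_eq_set]
    constructor
    · apply measure_mono_null ?_ line_null
      intro p hp
      exact le_antisymm (not_lt.mp hp.2) hp.1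
    · apply measure_mono_null ?_ line_null
      intro p hp
      exact absurd (show (0:ℝ) ≤ p.2 from le_of_lt hp.1) hp.2
  have e1 : ∫ p in {p : ℝ × ℝ | 0 ≤ p.2}, q p = ∫ p in {p : ℝ × ℝ | 0 < p.2}, q p :=
    setIntegral_congr_set hHA
  -- reflect the lower-half integral
  set Rf : ℝ × ℝ → ℝ := fun p => f p * c1 (σc p) - g p * c2 (σc p) with hRdef
  have hpre : {p : ℝ × ℝ | p.2 < 0}
      = (fun p : ℝ × ℝ => (p.1, -p.2)) ⁻¹' {p : ℝ × ℝ | 0 < p.2} := by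
    ext p
    simp [neg_pos]
  have hrR : (fun p : ℝ × ℝ => r p) = fun p : ℝ × ℝ => Rf ((p.1, -p.2)) := by
    funext p
    rw [hrdef, hRdef]
    dsimp only
    have hσσ : σc ((p.1, -p.2) : ℝ × ℝ) = p := by
      rw [σc_apply]; simp
    rw [hσσ]
    have hfp : f ((p.1, -p.2) : ℝ × ℝ) = f (σc p) := by rw [σc_apply]
    have hgp : g ((p.1, -p.2) : ℝ × ℝ) = g (σc p) := by rw [σc_apply]
    rw [hfp, hgp]
  have e2 : ∫ p in ({p : ℝ × ℝ | 0 ≤ p.2} : Set (ℝ × ℝ))ᶜ, r p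
      = ∫ p in {p : ℝ × ℝ | 0 < p.2}, Rf p := by
    rw [hcompl, hpre, hrR]
    exact measurePreserving_σ.setIntegral_preimage_emb measurableEmbedding_σ Rf _
  rw [e1, e2]
  -- combine into a single integral over the open half plane
  have hAsub : ({p : ℝ × ℝ | 0 < p.2} : Set (ℝ × ℝ)) ⊆ {p : ℝ × ℝ | 0 ≤ p.2} :=
    fun p hp => show (0:ℝ) ≤ p.2 from le_of_lt hp
  have hqintA : IntegrableOn q {p : ℝ × ℝ | 0 < p.2} := hqint.mono_set hAsub
  have hRint' : IntegrableOn Rf {p : ℝ × ℝ | 0 ≤ p.2} := by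
    apply Integrable.sub
    · exact integrableOn_mul_of_compactSupport hclosed hfc hc1σcont hc1σcs
    · exact integrableOn_mul_of_compactSupport hclosed hgc hc2σcont hc2σcs
  have hRint : IntegrableOn Rf {p : ℝ × ℝ | 0 < p.2} := hRint'.mono_set hAsub
  rw [← integral_add hqintA hRint]
  have hfinal : (fun p : ℝ × ℝ => q p + Rf p)
      = fun p : ℝ × ℝ => f p * fderiv ℝ ψ p (1, 0) + g p * fderiv ℝ ψ p (0, 1) := by
    funext p
    rw [hψd1, hψd2, hqdef, hRdef]
    dsimp only
    ring
  rw [hfinal]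
  -- apply the divergence theorem on the half plane
  apply halfplane_divergence f g
    (fun p => (fderiv ℝ (fun y => u y 0) (Lc p)).comp Lc)
    (fun p => (fderiv ℝ (fun y => u y 1) (Lc p)).comp Lc)
    ψ hfc hgc
  · -- hdf
    intro p hp
    have hnhds : {x : Fin 2 → ℝ | 0 ≤ x 1} ∈ nhds (Lc p) := by
      apply mem_nhds_iff.mpr
      refine ⟨{x : Fin 2 → ℝ | 0 < x 1}, fun x hx => show (0:ℝ) ≤ x 1 from le_of_lt hx,
        isOpen_lt continuous_const (continuous_apply 1), ?_⟩
      show (0:ℝ) < Lc p 1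
      rw [hLc1]
      exact hp
    have hdAt : DifferentiableAt ℝ u (Lc p) :=
      (hu.contDiffAt hnhds).differentiableAt one_ne_zero
    exact ((differentiableAt_pi.mp hdAt 0).hasFDerivAt).comp p Lc.hasFDerivAt
  · -- hdg
    intro p hp
    have hnhds : {x : Fin 2 → ℝ | 0 ≤ x 1} ∈ nhds (Lc p) := by
      apply mem_nhds_iff.mpr
      refine ⟨{x : Fin 2 → ℝ | 0 < x 1}, fun x hx => show (0:ℝ) ≤ x 1 from le_of_lt hx,
        isOpen_lt continuous_const (continuous_apply 1), ?_⟩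
      show (0:ℝ) < Lc p 1
      rw [hLc1]
      exact hp
    have hdAt : DifferentiableAt ℝ u (Lc p) :=
      (hu.contDiffAt hnhds).differentiableAt one_ne_zero
    exact ((differentiableAt_pi.mp hdAt 1).hasFDerivAt).comp p Lc.hasFDerivAt
  · -- hdiv
    intro p hp
    have h := hdiv (Lc p) (by rw [hLc1]; exact hp)
    simp only [ContinuousLinearMap.comp_apply, Lc_e1, Lc_e2]
    exact h
  · -- hg0
    intro x
    apply hb
    rw [hLc1]
  · exact hψsmooth
  · exact hψcs
end
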